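/- arXiv:2108.09695 — 3 statements merged into one kernel-verified Lean document; each statement's English description precedes it below -/
import Mathlib

section
/- A power function and an affine function intersect at most twice in the open first quadrant: for real constants C > 0, p ∈ ℝ, m, b ∈ ℝ, the set {x ∈ ℝ : x > 0, C·x^p > 0, and C·x^p = m·x + b} has at most 2 elements, provided the function x ↦ C·x^p − m·x − b is not identically zero on (0,∞). -/
/-!
By Rolle's theorem, three points where `f x = C x ^ p - m x` takes the same value `b` produce
two distinct zeros of `f' x = C p x ^ (p - 1) - m`. For `p ≠ 0, 1` this is impossible, since
`x ↦ x ^ (p - 1)` is injective on `(0, ∞)`. For `p ∈ {0, 1}` the function `f x - b` is affine,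
so two zeros already force it to vanish identically.
-/

open Set

section RolleTwice

variable {f f' : ℝ → ℝ} {s : Set ℝ}

lemma not_lt_lt_of_injOn_deriv (hs : s.OrdConnected) (hf : ∀ x ∈ s, HasDerivAt f (f' x) x)
    (hf' : InjOn f' s) {a b c y : ℝ} (ha : a ∈ s) (hc : c ∈ s) (hab : a < b) (hbc : b < c)
    (fa : f a = y) (fb : f b = y) (fc : f c = y) : False := by
  have hb : b ∈ s := hs.out ha hc ⟨hab.le, hbc.le⟩
  have rolle : ∀ {u v}, u ∈ s → v ∈ s → u < v → f u = y → f v = y → ∃ t ∈ Ioo u v, f' t = 0 :=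
    fun hu hv huv fu fv => exists_hasDerivAt_eq_zero huv
      (fun x hx => (hf x (hs.out hu hv hx)).continuousAt.continuousWithinAt) (fu.trans fv.symm)
      (fun x hx => hf x (hs.out hu hv (Ioo_subset_Icc_self hx)))
  obtain ⟨t₁, ht₁, f't₁⟩ := rolle ha hb hab fa fb
  obtain ⟨t₂, ht₂, f't₂⟩ := rolle hb hc hbc fb fc
  have ht₁s : t₁ ∈ s := hs.out ha hb (Ioo_subset_Icc_self ht₁)
  have ht₂s : t₂ ∈ s := hs.out hb hc (Ioo_subset_Icc_self ht₂)
  exact (ht₁.2.trans ht₂.1).ne (hf' ht₁s ht₂s (f't₁.trans f't₂.symm))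

lemma eq_or_eq_or_eq_of_injOn_deriv (hs : s.OrdConnected) (hf : ∀ x ∈ s, HasDerivAt f (f' x) x)
    (hf' : InjOn f' s) {a b c y : ℝ} (ha : a ∈ s) (hb : b ∈ s) (hc : c ∈ s)
    (fa : f a = y) (fb : f b = y) (fc : f c = y) : a = b ∨ a = c ∨ b = c := by
  by_contra! h
  obtain ⟨hab, hac, hbc⟩ := h
  wlog hab' : a < b generalizing a b
  · exact this hb ha fb fa hab.symm hbc hac (hab.lt_or_gt.resolve_left hab')
  have key := @not_lt_lt_of_injOn_deriv _ _ _ hs hf hf'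
  rcases hbc.lt_or_gt with hbc' | hcb
  · exact key ha hc hab' hbc' fa fb fc
  rcases hac.lt_or_gt with hac' | hca
  · exact key ha hb hac' hcb fa fc fb
  · exact key hc hb hca hab' fc fa fb

end RolleTwice

section PowerMinusLinear

variable {C p m : ℝ}

lemma hasDerivAt_mul_rpow_sub_mul {x : ℝ} (hx : 0 < x) :
    HasDerivAt (fun t => C * t ^ p - m * t) (C * p * x ^ (p - 1) - m) x := by
  have h := ((Real.hasDerivAt_rpow_const (p := p) (Or.inl hx.ne')).const_mul C).sub
    ((hasDerivAt_id x).const_mul m)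
  exact h.congr_deriv (by ring)

lemma injOn_mul_rpow_sub (hC : C ≠ 0) (hp₀ : p ≠ 0) (hp₁ : p ≠ 1) :
    InjOn (fun t => C * p * t ^ (p - 1) - m) (Ioi 0) := fun _ hx _ hy hxy =>
  Real.rpow_left_injOn (sub_ne_zero.2 hp₁) (mem_Ioi.1 hx).le (mem_Ioi.1 hy).le
    (mul_left_cancel₀ (mul_ne_zero hC hp₀) (sub_left_injective hxy))

lemma exists_mul_rpow_sub_mul_sub_eq_affine (b : ℝ) (hp : p = 0 ∨ p = 1) :
    ∃ α β : ℝ, ∀ t, C * t ^ p - m * t - b = α * t + β := by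
  rcases hp with rfl | rfl
  · exact ⟨-m, C - b, fun t => by rw [Real.rpow_zero]; ring⟩
  · exact ⟨C - m, -b, fun t => by rw [Real.rpow_one]; ring⟩

end PowerMinusLinear

lemma affine_eq_zero_of_ne {α β x y : ℝ} (hxy : x ≠ y) (hx : α * x + β = 0)
    (hy : α * y + β = 0) (t : ℝ) : α * t + β = 0 := by
  have hα : α = 0 := by
    have : α * (x - y) = 0 := by linear_combination hx - hy
    exact (mul_eq_zero.1 this).resolve_right (sub_ne_zero.2 hxy)
  subst hα
  linarith

/-- A power function and an affine function intersect at most twice in the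
open first quadrant, unless C·x^p − m·x − b vanishes identically on (0,∞). -/
theorem stmt4 (C p m b : ℝ) (hC : 0 < C)
    (hne : ¬ ∀ x : ℝ, 0 < x → C * x ^ p - m * x - b = 0) :
    ∀ x y z : ℝ,
      (0 < x ∧ 0 < C * x ^ p ∧ C * x ^ p = m * x + b) →
      (0 < y ∧ 0 < C * y ^ p ∧ C * y ^ p = m * y + b) →
      (0 < z ∧ 0 < C * z ^ p ∧ C * z ^ p = m * z + b) →
      x = y ∨ x = z ∨ y = z := by
  intro x y z hx hy hz
  have hroot : ∀ t, (0 < t ∧ 0 < C * t ^ p ∧ C * t ^ p = m * t + b) → C * t ^ p - m * t = b :=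
    fun t ht => by linarith [ht.2.2]
  by_cases hp : p = 0 ∨ p = 1
  · obtain ⟨α, β, hαβ⟩ := exists_mul_rpow_sub_mul_sub_eq_affine (C := C) (m := m) b hp
    have haffine : ∀ t, (0 < t ∧ 0 < C * t ^ p ∧ C * t ^ p = m * t + b) → α * t + β = 0 :=
      fun t ht => by rw [← hαβ, hroot t ht, sub_self]
    refine or_iff_not_imp_left.2 fun hxy => (hne fun t _ => ?_).elim
    rw [hαβ]
    exact affine_eq_zero_of_ne hxy (haffine x hx) (haffine y hy) t
  obtain ⟨hp₀, hp₁⟩ := not_or.1 hp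
  exact eq_or_eq_or_eq_of_injOn_deriv ordConnected_Ioi
    (fun t ht => hasDerivAt_mul_rpow_sub_mul ht) (injOn_mul_rpow_sub hC.ne' hp₀ hp₁)
    hx.1 hy.1 hz.1 (hroot x hx) (hroot y hy) (hroot z hz)
end

section
/- Let S₁ and S₄ be nonempty finite disjoint index sets with positive weights wₖ (k ∈ S₁ ∪ S₄) and positive reals bₖ. Suppose Σ_{k∈S₁} wₖ bₖ = Σ_{k∈S₄} wₖ bₖ. Then the quantity D := −Σ_{k∈S₁} wₖ bₖ² + Σ_{k∈S₄} wₖ bₖ² satisfies (−1/min_{k∈S₁} wₖ + 1/Σ_{k∈S₄} wₖ)·(Σ_{k∈S₁} wₖ bₖ)² ≤ D ≤ (−1/Σ_{k∈S₁} wₖ + 1/min_{k∈S₄} wₖ)·(Σ_{k∈S₁} wₖ bₖ)². -/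
/-!
Both sides of the balance equation equal `A = ∑_{S₁} w b`, so each of the two sums of `w b²` is
squeezed between `A² / ∑ w` (Cauchy–Schwarz) and `A² / min w` (each `b k ≤ A / min w`).
-/

namespace Finset

variable {ι : Type*}

theorem sq_sum_mul_div_sum_le_sum_mul_sq (s : Finset ι) (w b : ι → ℝ)
    (hw : ∀ k ∈ s, 0 < w k) :
    (∑ k ∈ s, w k * b k) ^ 2 / ∑ k ∈ s, w k ≤ ∑ k ∈ s, w k * b k ^ 2 := by
  calc (∑ k ∈ s, w k * b k) ^ 2 / ∑ k ∈ s, w k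
      ≤ ∑ k ∈ s, (w k * b k) ^ 2 / w k := sq_sum_div_le_sum_sq_div s _ hw
    _ = ∑ k ∈ s, w k * b k ^ 2 := sum_congr rfl fun k hk => by
          field_simp [(hw k hk).ne']

theorem sum_mul_sq_le_sq_sum_mul_div_inf' (s : Finset ι) (hs : s.Nonempty) (w b : ι → ℝ)
    (hw : ∀ k ∈ s, 0 < w k) (hb : ∀ k ∈ s, 0 ≤ b k) :
    ∑ k ∈ s, w k * b k ^ 2 ≤ (∑ k ∈ s, w k * b k) ^ 2 / s.inf' hs w := by
  have hwb : ∀ k ∈ s, 0 ≤ w k * b k := fun k hk => mul_nonneg (hw k hk).le (hb k hk)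
  have hb_le : ∀ k ∈ s, b k * s.inf' hs w ≤ ∑ j ∈ s, w j * b j := fun k hk =>
    calc b k * s.inf' hs w ≤ b k * w k := mul_le_mul_of_nonneg_left (inf'_le w hk) (hb k hk)
      _ = w k * b k := mul_comm _ _
      _ ≤ ∑ j ∈ s, w j * b j := single_le_sum hwb hk
  rw [le_div_iff₀ ((lt_inf'_iff hs).2 hw)]
  calc (∑ k ∈ s, w k * b k ^ 2) * s.inf' hs w
      = ∑ k ∈ s, w k * b k * (b k * s.inf' hs w) := by
        rw [sum_mul]; exact sum_congr rfl fun k _ => by ring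
    _ ≤ ∑ k ∈ s, w k * b k * ∑ j ∈ s, w j * b j :=
        sum_le_sum fun k hk => mul_le_mul_of_nonneg_left (hb_le k hk) (hwb k hk)
    _ = (∑ k ∈ s, w k * b k) ^ 2 := by rw [← sum_mul, sq]

end Finset

theorem stmt7_general (S1 S4 : Finset ℕ) (h1 : S1.Nonempty) (h4 : S4.Nonempty)
    (w b : ℕ → ℝ)
    (hw : ∀ k ∈ S1 ∪ S4, 0 < w k) (hb : ∀ k ∈ S1 ∪ S4, 0 < b k)
    (heq : ∑ k ∈ S1, w k * b k = ∑ k ∈ S4, w k * b k)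
    (D : ℝ) (hD : D = -(∑ k ∈ S1, w k * b k ^ 2) + ∑ k ∈ S4, w k * b k ^ 2) :
    (-(1 / S1.inf' h1 w) + 1 / ∑ k ∈ S4, w k) * (∑ k ∈ S1, w k * b k) ^ 2 ≤ D ∧
    D ≤ (-(1 / ∑ k ∈ S1, w k) + 1 / S4.inf' h4 w) * (∑ k ∈ S1, w k * b k) ^ 2 := by
  have hw1 : ∀ k ∈ S1, 0 < w k := fun k hk => hw k (Finset.mem_union_left _ hk)
  have hw4 : ∀ k ∈ S4, 0 < w k := fun k hk => hw k (Finset.mem_union_right _ hk)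
  have hb1 : ∀ k ∈ S1, 0 ≤ b k := fun k hk => (hb k (Finset.mem_union_left _ hk)).le
  have hb4 : ∀ k ∈ S4, 0 ≤ b k := fun k hk => (hb k (Finset.mem_union_right _ hk)).le
  have lower1 := S1.sq_sum_mul_div_sum_le_sum_mul_sq w b hw1
  have upper1 := S1.sum_mul_sq_le_sq_sum_mul_div_inf' h1 w b hw1 hb1
  have lower4 := S4.sq_sum_mul_div_sum_le_sum_mul_sq w b hw4
  have upper4 := S4.sum_mul_sq_le_sq_sum_mul_div_inf' h4 w b hw4 hb4
  rw [← heq] at lower4 upper4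
  rw [hD, add_mul, add_mul, neg_mul, neg_mul, one_div_mul_eq_div, one_div_mul_eq_div,
    one_div_mul_eq_div, one_div_mul_eq_div]
  exact ⟨add_le_add (neg_le_neg upper1) lower4, add_le_add (neg_le_neg lower1) upper4⟩

/-- Two-sided bound on D = −Σ_{S₁} wb² + Σ_{S₄} wb² at a balance point. -/
theorem stmt7 (S1 S4 : Finset ℕ) (h1 : S1.Nonempty) (h4 : S4.Nonempty)
    (hdisj : Disjoint S1 S4) (w b : ℕ → ℝ)
    (hw : ∀ k ∈ S1 ∪ S4, 0 < w k) (hb : ∀ k ∈ S1 ∪ S4, 0 < b k)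
    (heq : ∑ k ∈ S1, w k * b k = ∑ k ∈ S4, w k * b k)
    (D : ℝ) (hD : D = -(∑ k ∈ S1, w k * b k ^ 2) + ∑ k ∈ S4, w k * b k ^ 2) :
    (-(1 / S1.inf' h1 w) + 1 / ∑ k ∈ S4, w k) * (∑ k ∈ S1, w k * b k) ^ 2 ≤ D ∧
    D ≤ (-(1 / ∑ k ∈ S1, w k) + 1 / S4.inf' h4 w) * (∑ k ∈ S1, w k * b k) ^ 2 :=
  stmt7_general S1 S4 h1 h4 w b hw hb heq D hD
end

section
/- Let g be a C² function on an open interval I such that g''(z) < 0 at every critical point of g in I (every z with g'(z) = 0). Then for any K ∈ ℝ, the equation g(z) = K has at most 2 solutions in I. -/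
/-!
Between any three points where `g` takes the same value, Rolle's theorem gives two critical
points `p < q`, and the minimum of `g` on `[p, q]` is attained at a critical point `m` (an endpoint,
or an interior local minimum). But `g'' (m) < 0` makes `g'` change sign from positive to negative
at `m`, so `g` is strictly smaller than `g m` on both sides of `m`, and one of these sides meets
`[p, q]`.
-/

open Set Filter Topology

section SecondDerivativeTest

variable {f : ℝ → ℝ} {x₀ : ℝ}

theorem eventually_nhdsGT_lt_of_deriv_deriv_neg (hf'' : deriv (deriv f) x₀ < 0)
    (hf' : deriv f x₀ = 0) (hc : ContinuousWithinAt f (Ici x₀) x₀) :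
    ∀ᶠ x in 𝓝[>] x₀, f x < f x₀ := by
  have hsign := eventually_nhdsWithin_sign_eq_of_deriv_neg hf'' hf'
  obtain ⟨c, hx₀c, hneg⟩ := mem_nhdsGT_iff_exists_Ioo_subset.1
    (deriv_neg_right_of_sign_deriv (hsign.filter_mono nhdsWithin_le_nhds))
  filter_upwards [Ioo_mem_nhdsGT hx₀c] with x hx
  -- `deriv f y ≠ 0` forces differentiability at `y`, so continuity is only assumed at `x₀`
  have hcont : ContinuousOn f (Icc x₀ x) := fun y hy => by
    rcases hy.1.eq_or_lt with rfl | hy₀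
    · exact hc.mono Icc_subset_Ici_self
    · have hy' : deriv f y < 0 := hneg ⟨hy₀, hy.2.trans_lt hx.2⟩
      exact (differentiableAt_of_deriv_ne_zero hy'.ne).continuousAt.continuousWithinAt
  refine strictAntiOn_of_deriv_neg (convex_Icc x₀ x) hcont (fun y hy => ?_)
    (left_mem_Icc.2 hx.1.le) (right_mem_Icc.2 hx.1.le) hx.1
  rw [interior_Icc] at hy
  exact hneg ⟨hy.1, hy.2.trans hx.2⟩

theorem eventually_nhdsLT_lt_of_deriv_deriv_neg (hf'' : deriv (deriv f) x₀ < 0)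
    (hf' : deriv f x₀ = 0) (hc : ContinuousWithinAt f (Iic x₀) x₀) :
    ∀ᶠ x in 𝓝[<] x₀, f x < f x₀ := by
  have hsign := eventually_nhdsWithin_sign_eq_of_deriv_neg hf'' hf'
  obtain ⟨c, hcx₀, hpos⟩ := mem_nhdsLT_iff_exists_Ioo_subset.1
    (deriv_pos_left_of_sign_deriv (hsign.filter_mono nhdsWithin_le_nhds))
  filter_upwards [Ioo_mem_nhdsLT hcx₀] with x hx
  have hcont : ContinuousOn f (Icc x x₀) := fun y hy => by
    rcases hy.2.eq_or_lt with rfl | hy₀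
    · exact hc.mono Icc_subset_Iic_self
    · have hy' : 0 < deriv f y := hpos ⟨hx.1.trans_le hy.1, hy₀⟩
      exact (differentiableAt_of_deriv_ne_zero hy'.ne').continuousAt.continuousWithinAt
  refine strictMonoOn_of_deriv_pos (convex_Icc x x₀) hcont (fun y hy => ?_)
    (left_mem_Icc.2 hx.2.le) (right_mem_Icc.2 hx.2.le) hx.2
  rw [interior_Icc] at hy
  exact hpos ⟨hx.1.trans hy.1, hy.2⟩

theorem not_isMinOn_Icc_of_deriv_deriv_neg {a b : ℝ} (hab : a < b) (hx₀ : x₀ ∈ Icc a b)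
    (hc : ContinuousOn f (Icc a b)) (hf' : deriv f x₀ = 0) (hf'' : deriv (deriv f) x₀ < 0) :
    ¬IsMinOn f (Icc a b) x₀ := by
  intro hmin
  rcases hx₀.2.lt_or_eq with hx₀b | rfl
  · have hlt := eventually_nhdsGT_lt_of_deriv_deriv_neg hf'' hf'
      ((hc x₀ hx₀).mono_of_mem_nhdsWithin (Icc_mem_nhdsGE_of_mem ⟨hx₀.1, hx₀b⟩))
    obtain ⟨x, hfx, hx⟩ := (hlt.and (Icc_mem_nhdsGT_of_mem ⟨hx₀.1, hx₀b⟩)).exists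
    exact (hmin hx).not_gt hfx
  · have hlt := eventually_nhdsLT_lt_of_deriv_deriv_neg hf'' hf'
      ((hc _ hx₀).mono_of_mem_nhdsWithin (Icc_mem_nhdsLE_of_mem ⟨hab, le_rfl⟩))
    obtain ⟨x, hfx, hx⟩ := (hlt.and (Icc_mem_nhdsLT_of_mem ⟨hab, le_rfl⟩)).exists
    exact (hmin hx).not_gt hfx

theorem exists_isMinOn_Icc_deriv_eq_zero {a b : ℝ} (hab : a ≤ b)
    (hc : ContinuousOn f (Icc a b)) (ha : deriv f a = 0) (hb : deriv f b = 0) :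
    ∃ m ∈ Icc a b, IsMinOn f (Icc a b) m ∧ deriv f m = 0 := by
  obtain ⟨m, hm, hmin⟩ := isCompact_Icc.exists_isMinOn (nonempty_Icc.2 hab) hc
  refine ⟨m, hm, hmin, ?_⟩
  rcases hm.1.eq_or_lt with rfl | ham
  · exact ha
  rcases hm.2.eq_or_lt with rfl | hmb
  · exact hb
  exact (hmin.isLocalMin (Icc_mem_nhds ham hmb)).deriv_eq_zero

end SecondDerivativeTest

theorem Set.OrdConnected.not_apply_eq_apply_eq_of_deriv_deriv_neg {s : Set ℝ} {f : ℝ → ℝ}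
    (hs : s.OrdConnected) (hf : ContinuousOn f s)
    (hcrit : ∀ z ∈ s, deriv f z = 0 → deriv (deriv f) z < 0)
    {a b c : ℝ} (ha : a ∈ s) (hc : c ∈ s) (hab : a < b) (hbc : b < c) :
    ¬(f a = f b ∧ f b = f c) := by
  rintro ⟨hfab, hfbc⟩
  have hsub : Icc a c ⊆ s := hs.out ha hc
  obtain ⟨p, hp, hp0⟩ := exists_deriv_eq_zero hab
    (hf.mono ((Icc_subset_Icc_right hbc.le).trans hsub)) hfab
  obtain ⟨q, hq, hq0⟩ := exists_deriv_eq_zero hbc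
    (hf.mono ((Icc_subset_Icc_left hab.le).trans hsub)) hfbc
  have hpq : p < q := hp.2.trans hq.1
  have hpqs : Icc p q ⊆ s := (Icc_subset_Icc hp.1.le hq.2.le).trans hsub
  have hfpq : ContinuousOn f (Icc p q) := hf.mono hpqs
  obtain ⟨m, hm, hmin, hm0⟩ := exists_isMinOn_Icc_deriv_eq_zero hpq.le hfpq hp0 hq0
  exact not_isMinOn_Icc_of_deriv_deriv_neg hpq hm hfpq hm0 (hcrit m (hpqs hm) hm0) hmin

theorem stmt11_general (I : Set ℝ) (hIconn : I.OrdConnected)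
    (g : ℝ → ℝ) (hg : ContDiffOn ℝ 2 g I)
    (hcrit : ∀ z ∈ I, deriv g z = 0 → deriv (deriv g) z < 0)
    (K : ℝ) :
    ∀ x y z : ℝ, x ∈ I → y ∈ I → z ∈ I →
      g x = K → g y = K → g z = K → x = y ∨ x = z ∨ y = z := by
  intro x y z hx hy hz hgx hgy hgz
  have hno_triple : ∀ ⦃a b c : {t // t ∈ I ∧ g t = K}⦄, a < b → b < c → False :=
    fun a b c hab hbc => hIconn.not_apply_eq_apply_eq_of_deriv_deriv_neg hg.continuousOn hcrit
      a.2.1 c.2.1 hab hbc ⟨a.2.2.trans b.2.2.symm, b.2.2.trans c.2.2.symm⟩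
  simpa [or_comm, or_left_comm] using
    eq_or_eq_or_eq_of_forall_not_lt_lt hno_triple ⟨x, hx, hgx⟩ ⟨y, hy, hgy⟩ ⟨z, hz, hgz⟩

/-- If g is C² on an open interval and g'' < 0 at every critical point, then
each level K is attained at most twice. -/
theorem stmt11 (I : Set ℝ) (hIopen : IsOpen I) (hIconn : I.OrdConnected)
    (g : ℝ → ℝ) (hg : ContDiffOn ℝ 2 g I)
    (hcrit : ∀ z ∈ I, deriv g z = 0 → deriv (deriv g) z < 0)
    (K : ℝ) :
    ∀ x y z : ℝ, x ∈ I → y ∈ I → z ∈ I →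
      g x = K → g y = K → g z = K → x = y ∨ x = z ∨ y = z :=
  stmt11_general I hIconn g hg hcrit K
end
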